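/- arXiv:2512.13329 — 2 statements merged into one kernel-verified Lean document; each statement's English description precedes it below -/
import Mathlib

section
/- Let A be an n×n matrix over a commutative ring R, and let M_n = Σ_{1≤i<j≤n} E_{ij} be the strictly upper triangular matrix of all ones. Then the determinant of the 2n×2n block matrix [[I_n, I_n − A], [−M_n, I_n]] equals the determinant of I_{n−1} − Â, where Â is the (n−1)×(n−1) matrix obtained from A by deleting its first row and its last column. -/
open Matrix

/-!
By the Schur complement the determinant equals `det (1 + M - M * A)`. The shift matrix `S`
with ones on the superdiagonal satisfies `(1 + M) * S = M`, so `1 + M - M * A` factors as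
`(1 + M) * (1 - S * A)` with `1 + M` unitriangular. The rows of `S * A` are the rows
`2, …, n` of `A` followed by a zero row, so expanding `det (1 - S * A)` along its last row
leaves `det (1 - Â)`.
-/

namespace Matrix

variable {R : Type*} [CommRing R]

def strictUpperOnes (ι : Type*) [LinearOrder ι] : Matrix ι ι R :=
  of fun i j => if i < j then 1 else 0

theorem det_one_add_strictUpperOnes {ι : Type*} [Fintype ι] [LinearOrder ι] :
    (1 + strictUpperOnes ι : Matrix ι ι R).det = 1 := by
  have hupper : (1 + strictUpperOnes ι : Matrix ι ι R).IsUpperTriangular :=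
    fun i j (hji : j < i) => by simp [strictUpperOnes, one_apply_ne hji.ne', not_lt_of_gt hji]
  rw [det_of_isUpperTriangular hupper]
  simp [strictUpperOnes]

variable {n : ℕ}

theorem det_eq_det_submatrix_castSucc_of_row_last_eq_single
    (B : Matrix (Fin (n + 1)) (Fin (n + 1)) R) (h : B (Fin.last n) = Pi.single (Fin.last n) 1) :
    B.det = (B.submatrix Fin.castSucc Fin.castSucc).det := by
  rw [det_succ_row B (Fin.last n),
    Fintype.sum_eq_single (Fin.last n) fun j hj => by simp [h, hj]]
  simp [h, Fin.succAbove_last, Even.neg_one_pow ⟨n, rfl⟩]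

variable (n) in
def upShift : Matrix (Fin (n + 1)) (Fin (n + 1)) R :=
  of fun i j => if (i : ℕ) + 1 = j then 1 else 0

theorem upShift_apply_succ (i : Fin (n + 1)) (j : Fin n) :
    upShift n i j.succ = if i = j.castSucc then (1 : R) else 0 := by
  simp [upShift, Fin.ext_iff]

theorem upShift_apply_castSucc (i : Fin n) (j : Fin (n + 1)) :
    upShift n i.castSucc j = if j = i.succ then (1 : R) else 0 := by
  simp [upShift, Fin.ext_iff, eq_comm]

theorem mul_upShift_apply_zero (N : Matrix (Fin (n + 1)) (Fin (n + 1)) R) (i : Fin (n + 1)) :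
    (N * upShift n : Matrix _ _ R) i 0 = 0 := by
  simp [mul_apply, upShift]

theorem mul_upShift_apply_succ (N : Matrix (Fin (n + 1)) (Fin (n + 1)) R) (i : Fin (n + 1))
    (j : Fin n) : (N * upShift n : Matrix _ _ R) i j.succ = N i j.castSucc := by
  simp [mul_apply, upShift_apply_succ]

theorem upShift_mul_apply_castSucc (A : Matrix (Fin (n + 1)) (Fin (n + 1)) R) (i : Fin n)
    (j : Fin (n + 1)) : (upShift n * A : Matrix _ _ R) i.castSucc j = A i.succ j := by
  simp [mul_apply, upShift_apply_castSucc]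

theorem upShift_mul_apply_last (A : Matrix (Fin (n + 1)) (Fin (n + 1)) R) (j : Fin (n + 1)) :
    (upShift n * A : Matrix _ _ R) (Fin.last n) j = 0 := by
  have hzero (k : Fin (n + 1)) : upShift n (Fin.last n) k = (0 : R) := by
    simp only [upShift, of_apply, Fin.val_last]
    rw [if_neg (by omega)]
  simp [mul_apply, hzero]

theorem one_add_strictUpperOnes_mul_upShift :
    (1 + strictUpperOnes (Fin (n + 1))) * upShift n = (strictUpperOnes _ : Matrix _ _ R) := by
  ext i j
  induction j using Fin.cases with
  | zero => simp [mul_upShift_apply_zero, strictUpperOnes]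
  | succ j =>
    simp only [mul_upShift_apply_succ, strictUpperOnes, add_apply, one_apply, of_apply,
      ← Fin.le_castSucc_iff]
    rcases lt_trichotomy i j.castSucc with h | rfl | h
    · simp [h, h.ne, h.le]
    · simp
    · simp [h.ne', h.not_gt, h.not_ge]

end Matrix

/-- The determinant of the block matrix `[[I, I - A], [-M, I]]`, where `M` is the
strictly upper triangular all-ones matrix, equals `det (I - Â)` where `Â` is `A`
with its first row and last column deleted. -/
theorem stmt0 {R : Type*} [CommRing R] (n : ℕ)
    (A : Matrix (Fin (n + 1)) (Fin (n + 1)) R)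
    (M : Matrix (Fin (n + 1)) (Fin (n + 1)) R)
    (hM : M = Matrix.of fun i j => if i < j then (1 : R) else 0)
    (Ahat : Matrix (Fin n) (Fin n) R)
    (hAhat : Ahat = Matrix.of fun k l => A k.succ l.castSucc) :
    (Matrix.fromBlocks 1 (1 - A) (-M) 1).det = (1 - Ahat).det := by
  replace hM : M = strictUpperOnes (Fin (n + 1)) := hM
  have hfactor : 1 - -M * (1 - A) = (1 + M) * (1 - upShift n * A) := by
    rw [mul_sub (1 + M), ← mul_assoc, hM, one_add_strictUpperOnes_mul_upShift]
    noncomm_ring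
  have hlast : (1 - upShift n * A : Matrix _ _ R) (Fin.last n) = Pi.single (Fin.last n) 1 := by
    ext j
    simp [upShift_mul_apply_last, one_apply, Pi.single_apply, eq_comm]
  rw [det_fromBlocks_one₁₁, hfactor, det_mul, hM, det_one_add_strictUpperOnes, one_mul,
    det_eq_det_submatrix_castSucc_of_row_last_eq_single _ hlast, hAhat]
  congr 1
  ext i j
  simp [upShift_mul_apply_castSucc, one_apply]
end

section
/- Single-variable contraction theorem: in k[[h]] with variables r, s, let f, g, w be scalars with 1 − w invertible, and set w̃ = (1 − w)^{-1}. Then ⟨exp(g s + r f + r w s)⟩ = w̃ · exp(g w̃ f), where ⟨·⟩ is the Gaussian contraction functional ⟨F⟩ = Σ_m (1/m!)(∂_r^m ∂_s^m F)|_{r=s=0} applied to the formal power series F. -/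
/-!
The contraction pairs monomials diagonally, `⟨r^p s^q⟩ = δ_{pq} p!`. Since `u ^ N = 0` forces
`g`, `f`, `w` to be nilpotent, `exp (g s + r f + r w s) = exp (g s) exp (r f) exp (r w s)`
expands into the monomials `g^i f^j w^k r^(j+k) s^(i+k) / (i! j! k!)`, so its contraction is
`∑_{n,k} (n+k)! / (n!² k!) (g f)^n w^k`. Expanding `w̃^(n+1) = ∑_k C(n+k, n) w^k` (the negative
binomial series, a finite sum since `w` is nilpotent) turns `w̃ exp (g w̃ f)` into the same sum.
-/

open MvPolynomial

/-- The Gaussian contraction functional `⟨F⟩ = Σ_m (1/m!) (∂_r^m ∂_s^m F)|_{r=s=0}` on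
`B[r, s]` (variable `0` is `r`, variable `1` is `s`), for `B` a commutative ℚ-algebra. -/
noncomputable def gContr (B : Type*) [CommRing B] [Algebra ℚ B]
    (F : MvPolynomial (Fin 2) B) : B :=
  ∑ m ∈ Finset.range (F.totalDegree + 1),
    (m.factorial : ℚ)⁻¹ •
      MvPolynomial.eval 0 ((pderiv (0 : Fin 2))^[m] ((pderiv (1 : Fin 2))^[m] F))

open Finset

theorem MvPolynomial.coeff_iterate_pderiv {σ R : Type*} [CommSemiring R] (i : σ) (n : ℕ)
    (p : MvPolynomial σ R) (v : σ →₀ ℕ) :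
    coeff v ((pderiv i)^[n] p) =
      coeff (v + Finsupp.single i n) p * (v i + n).descFactorial n := by
  induction n generalizing v with
  | zero => simp
  | succ n ih =>
    rw [Function.iterate_succ_apply', coeff_pderiv, ih, add_assoc, ← Finsupp.single_add,
      add_comm 1 n, Nat.descFactorial_succ]
    simp only [Finsupp.coe_add, Pi.add_apply, Finsupp.single_eq_same]
    rw [show v i + 1 + n = v i + (n + 1) by omega, show v i + (n + 1) - n = v i + 1 by omega]
    push_cast
    ring

/-- The exponent of the monomial `r ^ p * s ^ q`. -/
noncomputable def rsExponent (p q : ℕ) : Fin 2 →₀ ℕ :=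
  Finsupp.single 0 p + Finsupp.single 1 q

theorem rsExponent_inj {a b c d : ℕ} : rsExponent a b = rsExponent c d ↔ a = c ∧ b = d := by
  refine ⟨fun h ↦ ⟨?_, ?_⟩, fun ⟨hac, hbd⟩ ↦ hac ▸ hbd ▸ rfl⟩
  · simpa [rsExponent] using DFunLike.congr_fun h 0
  · simpa [rsExponent] using DFunLike.congr_fun h 1

section NegativeBinomial

variable {R : Type*} [CommRing R]

theorem one_sub_mul_sum_range_choose_mul_pow (w : R) (n K : ℕ) :
    (1 - w) * ∑ k ∈ range K, ((n + 1 + k).choose (n + 1) : R) * w ^ k =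
      ∑ k ∈ range K, ((n + k).choose n : R) * w ^ k - (n + K).choose (n + 1) * w ^ K := by
  induction K with
  | zero => simp
  | succ K ih =>
    rw [sum_range_succ, mul_add, ih, sum_range_succ, show n + 1 + K = n + K + 1 by omega,
      Nat.choose_succ_succ, show n + (K + 1) = n + K + 1 by omega, Nat.choose_succ_succ]
    push_cast
    ring

theorem pow_succ_eq_sum_range_choose_mul_pow {w wt : R} (hwt : wt * (1 - w) = 1) {K : ℕ}
    (hK : w ^ K = 0) (n : ℕ) : wt ^ (n + 1) = ∑ k ∈ range K, ((n + k).choose n : R) * w ^ k := by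
  induction n with
  | zero =>
    calc wt ^ (0 + 1) = wt * ((1 - w) * ∑ k ∈ range K, w ^ k) := by
          rw [mul_neg_geom_sum, hK, sub_zero, mul_one, zero_add, pow_one]
      _ = _ := by simp [← mul_assoc, hwt]
  | succ n ih =>
    calc wt ^ (n + 1 + 1) = wt * ((1 - w) *
          ∑ k ∈ range K, ((n + 1 + k).choose (n + 1) : R) * w ^ k) := by
          rw [one_sub_mul_sum_range_choose_mul_pow, hK, mul_zero, sub_zero, ← ih, pow_succ']
      _ = _ := by rw [← mul_assoc, hwt, one_mul]

end NegativeBinomial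

section Contraction

variable {B : Type*} [CommRing B] [Algebra ℚ B]

omit [Algebra ℚ B] in
theorem eval_zero_iterate_pderiv_zero_one (F : MvPolynomial (Fin 2) B) (m : ℕ) :
    eval 0 ((pderiv 0)^[m] ((pderiv 1)^[m] F)) =
      coeff (rsExponent m m) F * (m.factorial * m.factorial) := by
  rw [eval_zero, constantCoeff_eq, coeff_iterate_pderiv, coeff_iterate_pderiv]
  simp [rsExponent, Nat.descFactorial_self, add_comm, mul_assoc]

theorem gContr_eq_sum_coeff (F : MvPolynomial (Fin 2) B) {K : ℕ}
    (hK : ∀ m ≥ K, coeff (rsExponent m m) F = 0) :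
    gContr B F = ∑ m ∈ range K, (m.factorial : B) * coeff (rsExponent m m) F := by
  have hdeg : ∀ m ≥ F.totalDegree + 1, coeff (rsExponent m m) F = 0 := fun m hm ↦
    coeff_eq_zero_of_totalDegree_lt <| by
      rw [← Finsupp.degree_apply, rsExponent, map_add, Finsupp.degree_single,
        Finsupp.degree_single]
      omega
  have hterm : ∀ m, (m.factorial : ℚ)⁻¹ • eval 0 ((pderiv 0)^[m] ((pderiv 1)^[m] F)) =
      (m.factorial : B) * coeff (rsExponent m m) F := by
    intro m
    have hinv : algebraMap ℚ B (m.factorial : ℚ)⁻¹ * m.factorial = 1 := by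
      rw [← map_natCast (algebraMap ℚ B), ← map_mul, inv_mul_cancel₀ (by positivity), map_one]
    rw [eval_zero_iterate_pderiv_zero_one, Algebra.smul_def]
    linear_combination (coeff (rsExponent m m) F * m.factorial) * hinv
  simp only [gContr, hterm]
  rw [← eventually_constant_sum (fun m hm ↦ by rw [hdeg m hm, mul_zero]) (le_max_left _ K),
    eventually_constant_sum (fun m hm ↦ by rw [hK m hm, mul_zero]) (le_max_right _ K)]

theorem gContr_sum_monomial {ι : Type*} (s : Finset ι) (p q : ι → ℕ) (c : ι → B) :
    gContr B (∑ x ∈ s, monomial (rsExponent (p x) (q x)) (c x)) =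
      ∑ x ∈ s, if p x = q x then ((p x).factorial : B) * c x else 0 := by
  have hcoeff : ∀ m, coeff (rsExponent m m) (∑ x ∈ s, monomial (rsExponent (p x) (q x)) (c x)) =
      ∑ x ∈ s, if p x = m ∧ q x = m then c x else 0 := by
    intro m
    simp only [coeff_sum, coeff_monomial, rsExponent_inj]
  have hlt : ∀ x ∈ s, p x < s.sup p + 1 := fun x hx ↦ Nat.lt_succ_of_le (le_sup hx)
  rw [gContr_eq_sum_coeff _ (K := s.sup p + 1) fun m hm ↦ by
    rw [hcoeff]
    exact sum_eq_zero fun x hx ↦ if_neg fun h ↦ by have := hlt x hx; omega]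
  simp only [hcoeff, mul_sum]
  rw [sum_comm]
  refine sum_congr rfl fun x hx ↦ ?_
  simp only [mul_ite, mul_zero, ite_and]
  rw [sum_ite_eq, if_pos (mem_range.2 (hlt x hx))]
  exact if_congr eq_comm rfl rfl

end Contraction

section Exponential

variable {B : Type*} [CommRing B] [Algebra ℚ B]

omit [Algebra ℚ B] in
theorem exists_pow_eq_zero_of_exponent_pow_eq_zero {f g w : B} {N : ℕ}
    (hN : (C g * X 1 + X 0 * C f + X 0 * C w * X 1 : MvPolynomial (Fin 2) B) ^ N = 0) :
    ∃ K, g ^ K = 0 ∧ f ^ K = 0 ∧ w ^ K = 0 := by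
  have hg : g ^ N = 0 := by simpa using congrArg (eval ![0, 1]) hN
  have hf : f ^ N = 0 := by simpa using congrArg (eval ![1, 0]) hN
  have hgf : IsNilpotent (C g * X 1 + X 0 * C f : MvPolynomial (Fin 2) B) :=
    (Commute.all _ _).isNilpotent_add ⟨N, by rw [mul_pow, ← C_pow, hg, C_0, zero_mul]⟩
      ⟨N, by rw [mul_pow, ← C_pow, hf, C_0, mul_zero]⟩
  obtain ⟨n, hw⟩ : IsNilpotent w := by
    simpa using (((Commute.all _ _).isNilpotent_sub ⟨N, hN⟩ hgf).map (eval ![1, 1]))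
  exact ⟨N + n, pow_eq_zero_of_le (by omega) hg, pow_eq_zero_of_le (by omega) hf,
    pow_eq_zero_of_le (by omega) hw⟩

theorem exp_monomial_eq_sum {σ : Type*} (e : σ →₀ ℕ) {c : B} {K : ℕ} (hc : c ^ K = 0) :
    IsNilpotent.exp (monomial e c) =
      ∑ i ∈ range K, monomial (i • e) ((i.factorial : ℚ)⁻¹ • c ^ i) := by
  rw [IsNilpotent.exp_eq_sum (by rw [monomial_pow, hc, monomial_zero])]
  simp only [monomial_pow, smul_monomial]

theorem exp_exponent_eq_sum_monomial {f g w : B} {K : ℕ} (hg : g ^ K = 0) (hf : f ^ K = 0)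
    (hw : w ^ K = 0) :
    IsNilpotent.exp (C g * X 1 + X 0 * C f + X 0 * C w * X 1 : MvPolynomial (Fin 2) B) =
      ∑ x ∈ range K ×ˢ range K ×ˢ range K,
        monomial (rsExponent (x.2.1 + x.2.2) (x.1 + x.2.2))
          ((x.1.factorial : ℚ)⁻¹ • g ^ x.1 * (x.2.1.factorial : ℚ)⁻¹ • f ^ x.2.1 *
            (x.2.2.factorial : ℚ)⁻¹ • w ^ x.2.2) := by
  have hu : (C g * X 1 + X 0 * C f + X 0 * C w * X 1 : MvPolynomial (Fin 2) B) =
      monomial (Finsupp.single 1 1) g + monomial (Finsupp.single 0 1) f +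
        monomial (Finsupp.single 0 1 + Finsupp.single 1 1) w := by
    rw [mul_comm (X 0) (C f), mul_comm (X 0) (C w), mul_assoc]
    simp only [X, C_mul_monomial, monomial_mul, mul_one]
  have hnil : ∀ (e : Fin 2 →₀ ℕ) {c : B}, c ^ K = 0 → IsNilpotent (monomial e c) :=
    fun e c hc ↦ ⟨K, by rw [monomial_pow, hc, monomial_zero]⟩
  rw [hu, IsNilpotent.exp_add_of_commute (Commute.all _ _)
      ((Commute.all _ _).isNilpotent_add (hnil _ hg) (hnil _ hf)) (hnil _ hw),
    IsNilpotent.exp_add_of_commute (Commute.all _ _) (hnil _ hg) (hnil _ hf),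
    exp_monomial_eq_sum _ hg, exp_monomial_eq_sum _ hf, exp_monomial_eq_sum _ hw,
    sum_mul_sum, sum_mul]
  simp only [sum_product, sum_mul_sum]
  refine sum_congr rfl fun i _ ↦ sum_congr rfl fun j _ ↦ sum_congr rfl fun k _ ↦ ?_
  rw [monomial_mul, monomial_mul]
  congr 2
  ext a
  fin_cases a <;> simp [rsExponent, add_comm]

theorem gContr_exp_exponent {f g w : B} {K : ℕ} (hg : g ^ K = 0) (hf : f ^ K = 0)
    (hw : w ^ K = 0) :
    gContr B (IsNilpotent.exp (C g * X 1 + X 0 * C f + X 0 * C w * X 1)) =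
      ∑ n ∈ range K, ∑ k ∈ range K, ((n + k).factorial : B) *
        ((n.factorial : ℚ)⁻¹ • g ^ n * (n.factorial : ℚ)⁻¹ • f ^ n *
          (k.factorial : ℚ)⁻¹ • w ^ k) := by
  rw [exp_exponent_eq_sum_monomial hg hf hw,
    gContr_sum_monomial _ (fun x : ℕ × ℕ × ℕ ↦ x.2.1 + x.2.2)
      (fun x : ℕ × ℕ × ℕ ↦ x.1 + x.2.2) fun x : ℕ × ℕ × ℕ ↦ (x.1.factorial : ℚ)⁻¹ • g ^ x.1 *
        (x.2.1.factorial : ℚ)⁻¹ • f ^ x.2.1 * (x.2.2.factorial : ℚ)⁻¹ • w ^ x.2.2]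
  simp only [sum_product, add_left_inj]
  refine sum_congr rfl fun n hn ↦ ?_
  rw [sum_comm]
  exact sum_congr rfl fun k _ ↦ by rw [sum_ite_eq', if_pos hn]

theorem mul_exp_mul_eq_sum {f g w wt : B} (hwt : wt * (1 - w) = 1) {K : ℕ} (hg : g ^ K = 0)
    (hw : w ^ K = 0) :
    wt * IsNilpotent.exp (g * wt * f) =
      ∑ n ∈ range K, ∑ k ∈ range K, ((n + k).factorial : B) *
        ((n.factorial : ℚ)⁻¹ • g ^ n * (n.factorial : ℚ)⁻¹ • f ^ n *
          (k.factorial : ℚ)⁻¹ • w ^ k) := by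
  rw [IsNilpotent.exp_eq_sum (k := K) (by rw [mul_pow, mul_pow, hg, zero_mul, zero_mul]),
    mul_sum]
  refine sum_congr rfl fun n _ ↦ ?_
  rw [mul_smul_comm, show wt * (g * wt * f) ^ n = g ^ n * f ^ n * wt ^ (n + 1) by ring,
    pow_succ_eq_sum_range_choose_mul_pow hwt hw, mul_sum, smul_sum]
  refine sum_congr rfl fun k _ ↦ ?_
  have hscalar : ((n + k).factorial : ℚ) * ((n.factorial : ℚ)⁻¹ * (n.factorial : ℚ)⁻¹ *
      (k.factorial : ℚ)⁻¹) = (n.factorial : ℚ)⁻¹ * (n + k).choose n := by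
    rw [Nat.cast_add_choose]
    field_simp
  have hscalar_B := congrArg (algebraMap ℚ B) hscalar
  simp only [map_mul, map_natCast] at hscalar_B
  simp only [Algebra.smul_def]
  linear_combination (g ^ n * f ^ n * w ^ k) * hscalar_B.symm

end Exponential

/-- The exponentials are truncated sums; they are the full exponentials because `u` and
`g * wt * f` are nilpotent, which is how the `h`-adic convergence of the paper is rendered. -/
theorem stmt13 (B : Type*) [CommRing B] [Algebra ℚ B]
    (f g w wt : B) (hwt : wt * (1 - w) = 1)
    (u : MvPolynomial (Fin 2) B)
    (hu : u = C g * X 1 + X 0 * C f + X 0 * C w * X 1)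
    (N M : ℕ) (hN : u ^ N = 0) (hM : (g * wt * f) ^ M = 0) :
    gContr B (∑ m ∈ Finset.range N, (m.factorial : ℚ)⁻¹ • u ^ m) =
      wt * ∑ m ∈ Finset.range M, (m.factorial : ℚ)⁻¹ • (g * wt * f) ^ m := by
  subst hu
  obtain ⟨K, hg, hf, hw⟩ := exists_pow_eq_zero_of_exponent_pow_eq_zero hN
  rw [← IsNilpotent.exp_eq_sum hN, ← IsNilpotent.exp_eq_sum hM, gContr_exp_exponent hg hf hw,
    mul_exp_mul_eq_sum hwt hg hw]
end
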